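/- Let A be an n×n pattern matrix all of whose diagonal entries are ?, and let B be an n×m pattern matrix. Then the structured system (A,B) is strongly structurally controllable if and only if the n×(n+m) pattern matrix [A B] has full row rank. -/

import Mathlib

/-- The symbols of a pattern matrix: fixed zero (`0`), arbitrary nonzero (`∗`),
and arbitrary (`?`). -/
inductive PSym : Type
  | zero
  | star
  | arb
  deriving DecidableEq

open Matrix

/-- The pattern class of a pattern matrix: real matrices that are `0` where the pattern
is `0`, nonzero where the pattern is `∗`, and unrestricted where the pattern is `?`. -/
def PatternClass {R C : Type*} (M : Matrix R C PSym) : Set (Matrix R C ℝ) :=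
  {A | ∀ i j, (M i j = PSym.zero → A i j = 0) ∧ (M i j = PSym.star → A i j ≠ 0)}

/-- A pattern matrix has full row rank if every member of its pattern class
has full row rank. -/
def PatternFullRowRank {R C : Type*} [Fintype R] [Fintype C] (M : Matrix R C PSym) : Prop :=
  ∀ A ∈ PatternClass M, A.rank = Fintype.card R

/-- Hautus test: `(A, B)` is controllable iff `[A - λI, B]` has rank `n` for all `λ ∈ ℂ`. -/
def Controllable {n m : ℕ} (A : Matrix (Fin n) (Fin n) ℝ) (B : Matrix (Fin n) (Fin m) ℝ) : Prop :=
  ∀ l : ℂ, (Matrix.fromCols (A.map (Complex.ofReal) - l • (1 : Matrix (Fin n) (Fin n) ℂ))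
      (B.map (Complex.ofReal))).rank = n

/-- Hautus test for stabilizability: `[A - λI, B]` has rank `n` for all `λ` with `Re λ ≥ 0`. -/
def Stabilizable {n m : ℕ} (A : Matrix (Fin n) (Fin n) ℝ) (B : Matrix (Fin n) (Fin m) ℝ) : Prop :=
  ∀ l : ℂ, 0 ≤ l.re →
    (Matrix.fromCols (A.map (Complex.ofReal) - l • (1 : Matrix (Fin n) (Fin n) ℂ))
      (B.map (Complex.ofReal))).rank = n

/-- Strong structural controllability of the structured system `(𝒜, ℬ)`. -/
def StrStrControllable {n m : ℕ} (𝒜 : Matrix (Fin n) (Fin n) PSym)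
    (ℬ : Matrix (Fin n) (Fin m) PSym) : Prop :=
  ∀ A ∈ PatternClass 𝒜, ∀ B ∈ PatternClass ℬ, Controllable A B

/-- Strong structural stabilizability of the structured system `(𝒜, ℬ)`. -/
def StrStrStabilizable {n m : ℕ} (𝒜 : Matrix (Fin n) (Fin n) PSym)
    (ℬ : Matrix (Fin n) (Fin m) PSym) : Prop :=
  ∀ A ∈ PatternClass 𝒜, ∀ B ∈ PatternClass ℬ, Stabilizable A B

/-- The pattern matrix `Ā` obtained from `𝒜` by replacing each diagonal entry by `∗`
if it is `0` and by `?` otherwise, keeping all off-diagonal entries. -/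
def barPattern {n : ℕ} (𝒜 : Matrix (Fin n) (Fin n) PSym) : Matrix (Fin n) (Fin n) PSym :=
  fun i j => if i = j then (if 𝒜 i i = PSym.zero then PSym.star else PSym.arb) else 𝒜 i j

/-- The sets of black nodes obtainable in `G(M)` by repeatedly applying the color change
rule, starting from the all-white coloring. The colorable nodes are the rows of `M`;
every node of `G(M)` corresponds to a column `c`, whose out-neighbors are the rows `k`
with `M k c ≠ 0`, and the edge from `c` to `k` is in `E_∗` iff `M k c = ∗`. A step colors
`j` black when some node `c` has `j` as its only white out-neighbor and `(c, j) ∈ E_∗`. -/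
inductive ColorStep {R C : Type*} (M : Matrix R C PSym) : Set R → Prop
  | init : ColorStep M ∅
  | step (S : Set R) (c : C) (j : R)
      (hS : ColorStep M S)
      (hstar : M j c = PSym.star)
      (hwhite : j ∉ S)
      (huniq : ∀ k : R, M k c ≠ PSym.zero → k ∉ S → k = j) :
      ColorStep M (insert j S)

/-- `G(M)` is colorable if all row-nodes can be colored black by repeated application
of the color change rule. -/
def PatternColorable {R C : Type*} (M : Matrix R C PSym) : Prop :=
  ColorStep M Set.univ

/-
Taking `λ = 0` in the Hautus test shows that controllability of `(A, B)` forces `[A B]` to have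
full row rank. Conversely, let `x ≠ 0` be a complex left null vector of `[A - λI, B]`. After
replacing `x` by a suitable complex multiple, its real part `w` vanishes exactly where `x` does.
Then `w B = 0`, and `(w A)_j = Re(λ x_j) = 0` wherever `w_j = 0`, so some real diagonal `D` makes
`w (A + D) = 0`. Since the diagonal of `𝒜` is free, `[A + D, B]` lies in the pattern class of
`[𝒜 ℬ]`, and `w ≠ 0` contradicts full row rank.
-/

theorem Matrix.rank_eq_card_iff_vecMul_eq_zero {K m n : Type*} [Field K] [Fintype m] [Fintype n]
    (M : Matrix m n K) : M.rank = Fintype.card m ↔ ∀ x, x ᵥ* M = 0 → x = 0 := by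
  rw [rank_eq_finrank_span_row, ← Set.finrank, eq_comm,
    ← linearIndependent_iff_card_eq_finrank_span, ← vecMul_injective_iff, ← coe_vecMulLinear,
    injective_iff_map_eq_zero]
  rfl

theorem Matrix.rank_eq_card_of_rank_map_eq_card {K L m n : Type*} [Field K] [Field L]
    [Fintype m] [Fintype n] (f : K →+* L) (M : Matrix m n K)
    (h : (M.map f).rank = Fintype.card m) : M.rank = Fintype.card m := by
  rw [rank_eq_card_iff_vecMul_eq_zero] at h ⊢
  intro x hx
  have hfx : (f ∘ x) ᵥ* M.map f = 0 := funext fun j => by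
    rw [← RingHom.map_vecMul, hx, Pi.zero_apply, map_zero, Pi.zero_apply]
  exact funext fun i => f.injective (by simpa using congrFun (h _ hfx) i)

theorem Matrix.exists_vecMul_add_diagonal_eq_zero {K ι : Type*} [Field K] [Fintype ι]
    [DecidableEq ι] (A : Matrix ι ι K) (w : ι → K) (h : ∀ j, w j = 0 → (w ᵥ* A) j = 0) :
    ∃ d, w ᵥ* (A + diagonal d) = 0 := by
  -- where `w j = 0` this is the junk value `0`, harmless since then `(w ᵥ* A) j = 0`
  refine ⟨fun j => -(w ᵥ* A) j / w j, funext fun j => ?_⟩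
  rw [vecMul_add, Pi.add_apply, vecMul_diagonal, Pi.zero_apply]
  by_cases hj : w j = 0
  · simp [hj, h j hj]
  · field_simp
    ring

theorem Complex.exists_re_mul_ne_zero {ι : Type*} [Finite ι] (x : ι → ℂ) :
    ∃ c : ℂ, ∀ j, x j ≠ 0 → (c * x j).re ≠ 0 := by
  -- `Re ((1 + t I) z) = Re z - t Im z` vanishes for `z ≠ 0` only if `t = Re z / Im z`
  obtain ⟨t, ht⟩ := (Set.finite_range fun j => (x j).re / (x j).im).infinite_compl.nonempty
  refine ⟨1 + t * I, fun j hxj hre => ht ⟨j, ?_⟩⟩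
  have hre : (x j).re = t * (x j).im := by
    simp only [mul_re, add_re, add_im, one_re, one_im, mul_im, ofReal_re, ofReal_im, I_re, I_im]
      at hre
    linarith
  have him : (x j).im ≠ 0 := fun him => hxj (Complex.ext (by simp [hre, him]) him)
  show (x j).re / (x j).im = t
  rw [hre, mul_div_cancel_right₀ _ him]

theorem Complex.re_vecMul_map_ofReal {ι κ : Type*} [Fintype ι] (y : ι → ℂ)
    (M : Matrix ι κ ℝ) : (fun i => (y i).re) ᵥ* M = fun j => ((y ᵥ* M.map ofReal) j).re := by
  funext j
  simp [vecMul, dotProduct, re_sum]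

theorem Controllable.rank_fromCols {n m : ℕ} {A : Matrix (Fin n) (Fin n) ℝ}
    {B : Matrix (Fin n) (Fin m) ℝ} (h : Controllable A B) : (fromCols A B).rank = n := by
  have h0 := h 0
  rw [zero_smul, sub_zero, ← fromCols_map] at h0
  exact (rank_eq_card_of_rank_map_eq_card Complex.ofRealHom (fromCols A B)
    (h0.trans (Fintype.card_fin n).symm)).trans (Fintype.card_fin n)

theorem controllable_of_forall_rank_fromCols_add_diagonal {n m : ℕ}
    (A : Matrix (Fin n) (Fin n) ℝ) (B : Matrix (Fin n) (Fin m) ℝ)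
    (h : ∀ d, (fromCols (A + diagonal d) B).rank = n) : Controllable A B := by
  intro l
  refine Eq.trans ?_ (Fintype.card_fin n)
  rw [rank_eq_card_iff_vecMul_eq_zero]
  intro x hx
  rw [vecMul_fromCols] at hx
  have hxA : x ᵥ* A.map Complex.ofReal = l • x := by
    have hnull : x ᵥ* (A.map Complex.ofReal - l • 1) = 0 :=
      funext fun j => congrFun hx (Sum.inl j)
    rwa [vecMul_sub, vecMul_smul, vecMul_one, sub_eq_zero] at hnull
  have hxB : x ᵥ* B.map Complex.ofReal = 0 := funext fun j => congrFun hx (Sum.inr j)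
  obtain ⟨c, hc⟩ := Complex.exists_re_mul_ne_zero x
  set w : Fin n → ℝ := fun i => ((c • x) i).re
  have hwA : w ᵥ* A = fun j => (l * (c * x j)).re := by
    rw [Complex.re_vecMul_map_ofReal, smul_vecMul, hxA]
    simp only [Pi.smul_apply, smul_eq_mul, mul_left_comm]
  have hwB : w ᵥ* B = 0 := by
    rw [Complex.re_vecMul_map_ofReal, smul_vecMul, hxB, smul_zero]
    rfl
  have hsupp : ∀ j, w j = 0 → x j = 0 := fun j hj => by_contra fun hxj => hc j hxj hj
  obtain ⟨d, hd⟩ := exists_vecMul_add_diagonal_eq_zero A w fun j hj => by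
    rw [hwA]; simp [hsupp j hj]
  have hw : w = 0 := (rank_eq_card_iff_vecMul_eq_zero _).mp (by rw [Fintype.card_fin]; exact h d)
    w (by rw [vecMul_fromCols, hd, hwB, Sum.elim_zero_zero])
  exact funext fun j => hsupp j (congrFun hw j)

theorem add_diagonal_mem_patternClass {ι : Type*} [DecidableEq ι] {𝒜 : Matrix ι ι PSym}
    (hdiag : ∀ i, 𝒜 i i = PSym.arb) {A : Matrix ι ι ℝ} (hA : A ∈ PatternClass 𝒜) (d : ι → ℝ) :
    A + diagonal d ∈ PatternClass 𝒜 := by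
  intro i j
  by_cases hij : i = j
  · subst hij
    simp [hdiag]
  · simpa [hij] using hA i j

theorem fromCols_mem_patternClass_iff {R C₁ C₂ : Type*} {𝒜 : Matrix R C₁ PSym}
    {ℬ : Matrix R C₂ PSym} {A : Matrix R C₁ ℝ} {B : Matrix R C₂ ℝ} :
    fromCols A B ∈ PatternClass (fromCols 𝒜 ℬ) ↔ A ∈ PatternClass 𝒜 ∧ B ∈ PatternClass ℬ := by
  simp only [PatternClass, Set.mem_ofPred_eq, Sum.forall, fromCols_apply_inl, fromCols_apply_inr]
  exact ⟨fun h => ⟨fun i => (h i).1, fun i => (h i).2⟩, fun h i => ⟨h.1 i, h.2 i⟩⟩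

/-- If all diagonal entries of `𝒜` are `?`, then `(𝒜, ℬ)` is strongly structurally
controllable iff `[𝒜 ℬ]` has full row rank. -/
theorem ssc_iff_full_row_rank_of_diag_arb {n m : ℕ} (𝒜 : Matrix (Fin n) (Fin n) PSym)
    (ℬ : Matrix (Fin n) (Fin m) PSym) (hdiag : ∀ i, 𝒜 i i = PSym.arb) :
    StrStrControllable 𝒜 ℬ ↔ PatternFullRowRank (Matrix.fromCols 𝒜 ℬ) := by
  constructor
  · intro hssc M hM
    rw [← fromCols_toCols M, fromCols_mem_patternClass_iff] at hM
    rw [← fromCols_toCols M, Fintype.card_fin]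
    exact (hssc _ hM.1 _ hM.2).rank_fromCols
  · intro hfrr A hA B hB
    refine controllable_of_forall_rank_fromCols_add_diagonal A B fun d => ?_
    have hmem := fromCols_mem_patternClass_iff.mpr ⟨add_diagonal_mem_patternClass hdiag hA d, hB⟩
    simpa using hfrr _ hmem
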